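/- Let Υ be the graph on K∪T where K induces a clique and T is an independent set completely joined to K, with edge weights γ_e = p(e)/(1-p(e)). For each k, let Z^k = Σ_{A'} q^{κ'(V,A')} Π_{e∈A'} γ_e, summed over edge subsets A' in which the vertices of T lie in exactly k connected components, where κ' counts components containing no vertex of T; let Z = Σ_k Z^k. Then Z^k/Z = Pr(Y(A)=k), where A is drawn from the random cluster distribution on the complete graph on K∪T (with p(e)=1 for pairs within T) and Y(A) is the number of components of (V, A∖T^(2)) containing vertices of T. -/

import Mathlib

/-!
A random-cluster configuration of positive weight contains every edge inside `T`, since those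
have `p = 1`; so it is `A ∪ T⁽²⁾` with `A` an edge set of `Υ`, and removing `T⁽²⁾` gives back `A`.
Wiring `T` together merges all components meeting `T` into one and leaves the other components
untouched, so `κ(A ∪ T⁽²⁾) = κ'(A) + [T ≠ ∅]`, while dividing `∏ p · ∏ (1 - p)` by
`∏_{e ∈ E(Υ)} (1 - p e)` leaves `∏_{e ∈ A} γ_e`. Hence the random-cluster weights of the
configurations with `Y = k`, and of all configurations, are one and the same multiple of `Z^k`
and of `Z`.
-/

open scoped Classical

/-- The connectivity setoid of the (hyper)graph `(V, F)`. -/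
noncomputable def connSetoid {V : Type*} (F : Finset (Finset V)) : Setoid V :=
  Relation.EqvGen.setoid (fun u v : V => ∃ f ∈ F, u ∈ f ∧ v ∈ f)

/-- Number of connected components of the graph `(V, F)`. -/
noncomputable def kappa {V : Type*} [Fintype V] (F : Finset (Finset V)) : ℕ :=
  Nat.card (Quotient (connSetoid F))

/-- The number `Y(F)` of connected components of `(V, F)` containing vertices
of the terminal set `T`. -/
noncomputable def Ycomp {V : Type*} [Fintype V] (T : Finset V) (F : Finset (Finset V)) : ℕ :=
  Nat.card (Quotient (Setoid.comap (Subtype.val : {x : V // x ∈ T} → V) (connSetoid F)))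

/-- The number `κ'(F)` of connected components of `(V, F)` containing no
vertex of the terminal set `T`. -/
noncomputable def kappaNoT {V : Type*} [Fintype V] (T : Finset V) (F : Finset (Finset V)) : ℕ :=
  Nat.card {c : Quotient (connSetoid F) // ∀ v ∈ T, Quotient.mk (connSetoid F) v ≠ c}

open Finset

section Connectivity

variable {V : Type*}

lemma connSetoid_mono {A B : Finset (Finset V)} (h : A ⊆ B) : connSetoid A ≤ connSetoid B :=
  Setoid.le_def.2 fun huv =>
    Relation.EqvGen.mono (fun _ _ ⟨f, hf, hu, hv⟩ => ⟨f, h hf, hu, hv⟩) _ _ huv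

lemma connSetoid_union_cases [DecidableEq V] {T : Finset V} {A W : Finset (Finset V)}
    (hW : ∀ f ∈ W, f ⊆ T) {u v : V} (h : connSetoid (A ∪ W) u v) :
    connSetoid A u v ∨ (∃ t ∈ T, connSetoid A u t) ∧ ∃ t ∈ T, connSetoid A v t := by
  induction h with
  | rel x y hxy =>
    obtain ⟨f, hf, hx, hy⟩ := hxy
    rcases mem_union.1 hf with hA | hW'
    · exact .inl (.rel _ _ ⟨f, hA, hx, hy⟩)
    · exact .inr ⟨⟨x, hW f hW' hx, .refl x⟩, ⟨y, hW f hW' hy, .refl y⟩⟩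
  | refl x => exact .inl (.refl x)
  | symm x y _ ih => exact ih.imp (connSetoid A).symm' And.symm
  | trans x y z _ _ ih₁ ih₂ =>
    rcases ih₁ with hxy | ⟨hx, ⟨t, ht, hyt⟩⟩ <;> rcases ih₂ with hyz | ⟨⟨t', ht', hyt'⟩, hz⟩
    · exact .inl ((connSetoid A).trans' hxy hyz)
    · exact .inr ⟨⟨t', ht', (connSetoid A).trans' hxy hyt'⟩, hz⟩
    · exact .inr ⟨hx, ⟨t, ht, (connSetoid A).trans' ((connSetoid A).symm' hyz) hyt⟩⟩
    · exact .inr ⟨hx, hz⟩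

variable [Fintype V]

lemma kappaNoT_union_of_forall_subset [DecidableEq V] {T : Finset V} {A W : Finset (Finset V)}
    (hW : ∀ f ∈ W, f ⊆ T) : kappaNoT T (A ∪ W) = kappaNoT T A := by
  have hle := connSetoid_mono (A := A) (B := A ∪ W) subset_union_left
  symm
  refine Nat.card_eq_of_bijective (fun c => ⟨Setoid.map_of_le hle c.1, ?_⟩) ⟨?_, ?_⟩
  · obtain ⟨c, hc⟩ := c
    induction c using Quotient.ind with | _ u => ?_
    intro v hv hvu
    rcases connSetoid_union_cases hW (Quotient.exact hvu) with h | ⟨-, t, ht, hut⟩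
    · exact hc v hv (Quotient.sound h)
    · exact hc t ht (Quotient.sound ((connSetoid A).symm' hut))
  · rintro ⟨c₁, hc₁⟩ ⟨c₂, hc₂⟩ h
    induction c₁ using Quotient.ind with | _ u₁ => ?_
    induction c₂ using Quotient.ind with | _ u₂ => ?_
    rcases connSetoid_union_cases hW (Quotient.exact (congrArg Subtype.val h))
      with h | ⟨⟨t, ht, hut⟩, -⟩
    · exact Subtype.ext (Quotient.sound h)
    · exact (hc₁ t ht (Quotient.sound ((connSetoid A).symm' hut))).elim
  · rintro ⟨d, hd⟩
    induction d using Quotient.ind with | _ u => ?_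
    exact ⟨⟨Quotient.mk _ u, fun v hv hvu =>
      hd v hv (Quotient.sound (Setoid.le_def.1 hle (Quotient.exact hvu)))⟩, rfl⟩

lemma kappa_eq_kappaNoT_add_Ycomp (T : Finset V) (F : Finset (Finset V)) :
    kappa F = kappaNoT T F + Ycomp T F := by
  rw [kappa, kappaNoT, Ycomp, ← Nat.card_sum]
  refine Nat.card_congr ((Equiv.sumCompl (· ∈ Set.range _)).symm.trans ((Equiv.sumComm _ _).trans
    (Equiv.sumCongr (Equiv.subtypeEquivRight fun c => ?_) (Setoid.comapQuotientEquiv _ _).symm)))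
  simp

lemma Ycomp_eq_ite_of_forall_connSetoid {T : Finset V} {F : Finset (Finset V)}
    (hT : ∀ t ∈ T, ∀ t' ∈ T, connSetoid F t t') : Ycomp T F = if T.Nonempty then 1 else 0 := by
  rw [Ycomp]
  split_ifs with hne
  · obtain ⟨t₀, ht₀⟩ := hne
    have : Subsingleton (Quotient (Setoid.comap Subtype.val (connSetoid F))) :=
      ⟨fun a b => Quotient.inductionOn₂ a b fun t t' => Quotient.sound (hT _ t.2 _ t'.2)⟩
    exact Nat.card_eq_one_iff_unique.2 ⟨this, ⟨Quotient.mk _ ⟨t₀, ht₀⟩⟩⟩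
  · have : IsEmpty {x : V // x ∈ T} := ⟨fun t => hne ⟨t, t.2⟩⟩
    exact Nat.card_of_isEmpty

lemma kappa_union_of_wired [DecidableEq V] {T : Finset V} {A W : Finset (Finset V)}
    (hW : ∀ f ∈ W, f ⊆ T) (hwired : ∀ t ∈ T, ∀ t' ∈ T, t ≠ t' → {t, t'} ∈ W) :
    kappa (A ∪ W) = kappaNoT T A + if T.Nonempty then 1 else 0 := by
  rw [kappa_eq_kappaNoT_add_Ycomp T, kappaNoT_union_of_forall_subset hW,
    Ycomp_eq_ite_of_forall_connSetoid]
  intro t ht t' ht'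
  obtain rfl | hne := eq_or_ne t t'
  · exact (connSetoid _).refl' t
  · exact .rel _ _ ⟨{t, t'}, mem_union_right _ (hwired t ht t' ht' hne), by simp, by simp⟩

end Connectivity

namespace Finset

variable {α β : Type*} [DecidableEq α]

theorem sum_powerset_eq_sum_powerset_sdiff_union [AddCommMonoid β] {E S : Finset α}
    (hS : S ⊆ E) (g : Finset α → β) (hg : ∀ A, ¬ S ⊆ A → g A = 0) :
    ∑ A ∈ E.powerset, g A = ∑ A ∈ (E \ S).powerset, g (A ∪ S) := by
  rw [← sum_filter_of_ne fun A _ h => not_not.1 (mt (hg A) h)]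
  have hdisj {A} (hA : A ∈ (E \ S).powerset) : Disjoint A S :=
    disjoint_of_subset_left (mem_powerset.1 hA) sdiff_disjoint
  refine sum_nbij' (· \ S) (· ∪ S) (fun A hA => ?_) (fun A hA => ?_)
    (fun A hA => sdiff_union_of_subset (mem_filter.1 hA).2)
    (fun A hA => union_sdiff_cancel_right (hdisj hA))
    (fun A hA => by rw [sdiff_union_of_subset (mem_filter.1 hA).2])
  · exact mem_powerset.2 (sdiff_subset_sdiff (mem_powerset.1 (mem_filter.1 hA).1) le_rfl)
  · exact mem_filter.2 ⟨mem_powerset.2 (union_subset ((mem_powerset.1 hA).trans sdiff_subset) hS),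
      subset_union_right⟩

theorem prod_union_mul_prod_sdiff_one_sub {K : Type*} [Field K] {E S A : Finset α} (p : α → K)
    (hA : A ⊆ E \ S) (hS : ∀ e ∈ S, p e = 1) (hp : ∀ e ∈ E \ S, p e ≠ 1) :
    (∏ e ∈ A ∪ S, p e) * ∏ e ∈ E \ (A ∪ S), (1 - p e) =
      (∏ e ∈ A, p e / (1 - p e)) * ∏ e ∈ E \ S, (1 - p e) := by
  have hpA : ∏ e ∈ A, p e = (∏ e ∈ A, p e / (1 - p e)) * ∏ e ∈ A, (1 - p e) := by
    rw [← prod_mul_distrib]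
    exact prod_congr rfl fun e he => (div_mul_cancel₀ _ (sub_ne_zero.2 (hp e (hA he)).symm)).symm
  rw [prod_union (disjoint_of_subset_left hA sdiff_disjoint), prod_eq_one hS, mul_one, hpA,
    ← prod_sdiff hA, sdiff_sdiff_left', sdiff_union_distrib, inter_comm]
  ring

end Finset

/-- Wiring lemma: `Z^k/Z = Pr(Y(A)=k)` where `A` is a random cluster sample on
the complete graph on `K ∪ T` (edges within `T` having `p = 1`) and `Y(A)` is
the number of components of `(V, A∖T⁽²⁾)` meeting `T`. -/
theorem wiring_lemma {V : Type*} [Fintype V] [DecidableEq V]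
    (T : Finset V) (q : ℝ) (hq : 0 < q) (p : Finset V → ℝ)
    (hpT : ∀ e : Finset V, e.card = 2 → e ⊆ T → p e = 1)
    (hp : ∀ e : Finset V, e.card = 2 → ¬ e ⊆ T → 0 ≤ p e ∧ p e < 1)
    (k : ℕ) :
    let Eall : Finset (Finset V) := Finset.univ.powersetCard 2
    let ET : Finset (Finset V) := Eall.filter (fun e => e ⊆ T)
    let EΥ : Finset (Finset V) := Eall \ ET
    let γ : Finset V → ℝ := fun e => p e / (1 - p e)
    let Zk : ℝ := ∑ A ∈ EΥ.powerset,
      if Ycomp T A = k then q ^ kappaNoT T A * ∏ e ∈ A, γ e else 0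
    let Z : ℝ := ∑ A ∈ EΥ.powerset, q ^ kappaNoT T A * ∏ e ∈ A, γ e
    let w : Finset (Finset V) → ℝ := fun A =>
      q ^ kappa A * (∏ e ∈ A, p e) * ∏ e ∈ Eall \ A, (1 - p e)
    Zk / Z = (∑ A ∈ Eall.powerset, if Ycomp T (A \ ET) = k then w A else 0) /
        (∑ A ∈ Eall.powerset, w A) := by
  intro Eall ET EΥ γ Zk Z w
  have hET : ∀ e ∈ ET, e ⊆ T := fun e he => (mem_filter.1 he).2
  have hwired : ∀ t ∈ T, ∀ t' ∈ T, t ≠ t' → {t, t'} ∈ ET := fun t ht t' ht' hne =>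
    mem_filter.2 ⟨mem_powersetCard.2 ⟨subset_univ _, card_pair hne⟩,
      insert_subset ht (singleton_subset_iff.2 ht')⟩
  have hp_ET : ∀ e ∈ ET, p e = 1 := fun e he =>
    hpT e (mem_powersetCard.1 (mem_filter.1 he).1).2 (hET e he)
  have hp_EΥ : ∀ e ∈ EΥ, p e < 1 := fun e he =>
    have ⟨heAll, heT⟩ := mem_sdiff.1 he
    (hp e (mem_powersetCard.1 heAll).2 fun h => heT (mem_filter.2 ⟨heAll, h⟩)).2
  set c := q ^ (if T.Nonempty then 1 else 0) * ∏ e ∈ EΥ, (1 - p e)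
  have hc : c ≠ 0 := (mul_pos (pow_pos hq _) (prod_pos fun e he => sub_pos.2 (hp_EΥ e he))).ne'
  have hw : ∀ A ∈ EΥ.powerset, w (A ∪ ET) = c * (q ^ kappaNoT T A * ∏ e ∈ A, γ e) := by
    intro A hA
    simp only [w, mul_assoc, kappa_union_of_wired hET hwired, pow_add,
      prod_union_mul_prod_sdiff_one_sub p (mem_powerset.1 hA) hp_ET fun e he => (hp_EΥ e he).ne]
    ring
  have hw_zero : ∀ A, ¬ ET ⊆ A → w A = 0 := fun A hA =>
    have ⟨e, he, heA⟩ := not_subset.1 hA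
    mul_eq_zero_of_right _ (prod_eq_zero (mem_sdiff.2 ⟨(mem_filter.1 he).1, heA⟩)
      (by rw [hp_ET e he, sub_self]))
  have hnum : ∑ A ∈ Eall.powerset, (if Ycomp T (A \ ET) = k then w A else 0) = c * Zk := by
    rw [sum_powerset_eq_sum_powerset_sdiff_union (filter_subset _ _) _
      fun A hA => by rw [hw_zero A hA, ite_self], mul_sum]
    refine sum_congr rfl fun A hA => ?_
    rw [union_sdiff_cancel_right (disjoint_of_subset_left (mem_powerset.1 hA) sdiff_disjoint),
      hw A hA, mul_ite, mul_zero]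
  have hden : ∑ A ∈ Eall.powerset, w A = c * Z := by
    rw [sum_powerset_eq_sum_powerset_sdiff_union (filter_subset _ _) w hw_zero, mul_sum]
    exact sum_congr rfl hw
  rw [hnum, hden, mul_div_mul_left _ _ hc]
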